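/- For all ξ in ℂ \ ℝ≤0 one has |K₁(ξ)| ≤ e^{-Re ξ} ( 1/|ξ| + √(π/(2|ξ|)) ). -/

import Mathlib

open Complex MeasureTheory

/-- The modified Bessel function of the second kind of order one on `ℂ \ ℝ≤0`,
given by `K₁(ξ) = (e^{-ξ}/ξ) ∫₀^∞ e^{-t} √(t² + 2ξt) dt` (principal square root). -/
noncomputable def K1 (ξ : ℂ) : ℂ :=
  (Complex.exp (-ξ) / ξ) *
    ∫ t in Set.Ioi (0 : ℝ), Complex.exp (-(t : ℂ)) * ((t : ℂ) ^ 2 + 2 * ξ * t) ^ ((1 : ℂ) / 2)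

lemma my_sqrt_add_le (x y : ℝ) (hx : 0 ≤ x) (hy : 0 ≤ y) :
    Real.sqrt (x + y) ≤ Real.sqrt x + Real.sqrt y := by
  have h : x + y ≤ (Real.sqrt x + Real.sqrt y) ^ 2 := by
    rw [add_sq, Real.sq_sqrt hx, Real.sq_sqrt hy]
    nlinarith [Real.sqrt_nonneg x, Real.sqrt_nonneg y]
  calc Real.sqrt (x + y) ≤ Real.sqrt ((Real.sqrt x + Real.sqrt y) ^ 2) := Real.sqrt_le_sqrt h
    _ = Real.sqrt x + Real.sqrt y := Real.sqrt_sq (by positivity)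

/-- For all `ξ ∈ ℂ \ ℝ≤0`, `|K₁(ξ)| ≤ e^{-Re ξ} (1/|ξ| + √(π/(2|ξ|)))`. -/
theorem K1_upper_bound (ξ : ℂ) (hξ : ξ ∈ Complex.slitPlane) :
    ‖K1 ξ‖ ≤ Real.exp (-ξ.re) * (1 / ‖ξ‖ + Real.sqrt (Real.pi / (2 * ‖ξ‖))) := by
  have hξ0 : ξ ≠ 0 := Complex.slitPlane_ne_zero hξ
  have habs : (0 : ℝ) < ‖ξ‖ := norm_pos_iff.mpr hξ0
  set c : ℝ := Real.sqrt (2 * ‖ξ‖) with hc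
  have hc0 : 0 ≤ c := Real.sqrt_nonneg _
  -- integrability of the bounding function
  have hint1 : IntegrableOn (fun t : ℝ => Real.exp (-t) * t) (Set.Ioi 0) := by
    have h := Real.GammaIntegral_convergent (by norm_num : (0:ℝ) < 2)
    refine h.congr_fun (fun t ht => ?_) measurableSet_Ioi
    beta_reduce; rw [show (2:ℝ) - 1 = 1 by norm_num, Real.rpow_one]
  have hint2 : IntegrableOn (fun t : ℝ => Real.exp (-t) * Real.sqrt t) (Set.Ioi 0) := by
    have h := Real.GammaIntegral_convergent (by norm_num : (0:ℝ) < 3/2)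
    refine h.congr_fun (fun t ht => ?_) measurableSet_Ioi
    beta_reduce; rw [show (3:ℝ)/2 - 1 = 1/2 by norm_num, ← Real.sqrt_eq_rpow]
  have hg : IntegrableOn
      (fun t : ℝ => Real.exp (-t) * t + c * (Real.exp (-t) * Real.sqrt t)) (Set.Ioi 0) :=
    hint1.add (hint2.const_mul c)
  -- pointwise bound and integral bound
  have hbound : ‖∫ t in Set.Ioi (0:ℝ),
        Complex.exp (-(t : ℂ)) * ((t : ℂ) ^ 2 + 2 * ξ * t) ^ ((1 : ℂ) / 2)‖ ≤
      ∫ t in Set.Ioi (0:ℝ), (Real.exp (-t) * t + c * (Real.exp (-t) * Real.sqrt t)) := by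
    refine MeasureTheory.norm_integral_le_of_norm_le hg ?_
    filter_upwards [ae_restrict_mem measurableSet_Ioi] with t ht
    have ht0 : 0 < t := ht
    rw [norm_mul]
    have h1 : ‖Complex.exp (-(t : ℂ))‖ = Real.exp (-t) := by
      rw [Complex.norm_exp]; norm_num
    have h2 : ‖((t : ℂ) ^ 2 + 2 * ξ * t) ^ ((1 : ℂ) / 2)‖ ≤ t + c * Real.sqrt t := by
      have h3 := Complex.norm_cpow_le ((t : ℂ) ^ 2 + 2 * ξ * t) ((1 : ℂ) / 2)
      simp only [show ((1:ℂ)/2).re = 1/2 by norm_num, show ((1:ℂ)/2).im = 0 by norm_num,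
        mul_zero, Real.exp_zero, div_one] at h3
      refine h3.trans ?_
      rw [← Real.sqrt_eq_rpow]
      have habs2 : ‖((t : ℂ) ^ 2 + 2 * ξ * t)‖ ≤ t ^ 2 + 2 * ‖ξ‖ * t := by
        refine (norm_add_le _ _).trans ?_
        simp [norm_mul, Complex.norm_real, abs_of_pos ht0, sq_abs]
      refine (Real.sqrt_le_sqrt habs2).trans ?_
      refine (my_sqrt_add_le _ _ (by positivity) (by positivity)).trans ?_
      rw [Real.sqrt_sq ht0.le, show 2 * ‖ξ‖ * t = (2 * ‖ξ‖) * t by ring,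
        Real.sqrt_mul (by positivity)]
    calc ‖Complex.exp (-(t:ℂ))‖ * ‖((t : ℂ) ^ 2 + 2 * ξ * t) ^ ((1 : ℂ) / 2)‖
        ≤ Real.exp (-t) * (t + c * Real.sqrt t) := by
          rw [h1]; exact mul_le_mul_of_nonneg_left h2 (Real.exp_pos _).le
      _ = Real.exp (-t) * t + c * (Real.exp (-t) * Real.sqrt t) := by ring
  -- compute the bounding integral
  have hval : (∫ t in Set.Ioi (0:ℝ),
      (Real.exp (-t) * t + c * (Real.exp (-t) * Real.sqrt t))) = 1 + c * (Real.sqrt Real.pi / 2) := by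
    rw [MeasureTheory.integral_add hint1 (hint2.const_mul c),
      MeasureTheory.integral_const_mul]
    have e1 : (∫ t in Set.Ioi (0:ℝ), Real.exp (-t) * t) = 1 := by
      have h := Real.Gamma_eq_integral (by norm_num : (0:ℝ) < 2)
      rw [show (2:ℝ) = 1 + 1 by norm_num, Real.Gamma_add_one one_ne_zero, Real.Gamma_one,
        mul_one] at h
      rw [h]
      congr 1; ext t; rw [show (1:ℝ) + 1 - 1 = 1 by norm_num, Real.rpow_one]
    have e2 : (∫ t in Set.Ioi (0:ℝ), Real.exp (-t) * Real.sqrt t) = Real.sqrt Real.pi / 2 := by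
      have h := Real.Gamma_eq_integral (by norm_num : (0:ℝ) < 3/2)
      rw [show (3:ℝ)/2 = 1/2 + 1 by norm_num, Real.Gamma_add_one (by norm_num : (1:ℝ)/2 ≠ 0),
        Real.Gamma_one_half_eq] at h
      have : (∫ t in Set.Ioi (0:ℝ), Real.exp (-t) * Real.sqrt t)
          = ∫ x in Set.Ioi (0:ℝ), Real.exp (-x) * x ^ ((1:ℝ)/2 + 1 - 1) := by
        congr 1; ext t; rw [show (1:ℝ)/2 + 1 - 1 = 1/2 by norm_num, ← Real.sqrt_eq_rpow]
      rw [this, ← h]; ring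
    rw [e1, e2]
  -- put everything together
  have hnorm : ‖K1 ξ‖ = Real.exp (-ξ.re) / ‖ξ‖ *
      ‖∫ t in Set.Ioi (0:ℝ), Complex.exp (-(t:ℂ)) * ((t:ℂ)^2 + 2*ξ*t) ^ ((1:ℂ)/2)‖ := by
    rw [K1, norm_mul, norm_div, Complex.norm_exp]
    norm_num
  rw [hnorm]
  have key : Real.exp (-ξ.re) / ‖ξ‖ * (1 + c * (Real.sqrt Real.pi / 2)) =
      Real.exp (-ξ.re) * (1 / ‖ξ‖ + Real.sqrt (Real.pi / (2 * ‖ξ‖))) := by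
    have hsq : c * c = 2 * ‖ξ‖ := Real.mul_self_sqrt (by positivity)
    have hcpos : 0 < c := Real.sqrt_pos.mpr (by positivity)
    have h1 : Real.sqrt (Real.pi / (2 * ‖ξ‖)) = Real.sqrt Real.pi / c := by
      rw [hc, Real.sqrt_div Real.pi_pos.le]
    rw [h1]
    have hA : ‖ξ‖ = c * c / 2 := by rw [hsq]; ring
    rw [hA]
    field_simp
  calc Real.exp (-ξ.re) / ‖ξ‖ *
        ‖∫ t in Set.Ioi (0:ℝ), Complex.exp (-(t:ℂ)) * ((t:ℂ)^2 + 2*ξ*t) ^ ((1:ℂ)/2)‖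
      ≤ Real.exp (-ξ.re) / ‖ξ‖ * (1 + c * (Real.sqrt Real.pi / 2)) := by
        refine mul_le_mul_of_nonneg_left ?_ (by positivity)
        rw [← hval]; exact hbound
    _ = Real.exp (-ξ.re) * (1 / ‖ξ‖ + Real.sqrt (Real.pi / (2 * ‖ξ‖))) := key
    _ = Real.exp (-ξ.re) * (1 / ‖ξ‖ + Real.sqrt (Real.pi / (2 * ‖ξ‖))) := by
        rfl
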